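/- arXiv:1008.0279 — 5 statements merged into one kernel-verified Lean document; each statement's English description precedes it below -/
import Mathlib

section
/- The bilinear form on the extended Newton-Hooke Lie algebra defined by ⟨J,M⟩=⟨H,S⟩=1/(8πG), ⟨P_i,J_j⟩=−δ_{ij}/(8πG) (and zero on all other pairs of basis elements) is invariant under the adjoint action: ⟨[X,Y],Z⟩+⟨Y,[X,Z]⟩=0 for all X,Y,Z. -/
/-- Structure constants of the doubly extended Newton-Hooke Lie algebra,
basis `0 = J, 1 = J₁, 2 = J₂, 3 = H, 4 = P₁, 5 = P₂, 6 = S, 7 = M`. -/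
def nhC (lam : ℝ) (i j k : Fin 8) : ℝ :=
  match i.val, j.val, k.val with
  | 1, 2, 6 => 1 | 2, 1, 6 => -1
  | 1, 0, 2 => 1 | 0, 1, 2 => -1 | 2, 0, 1 => -1 | 0, 2, 1 => 1
  | 1, 5, 7 => 1 | 5, 1, 7 => -1 | 2, 4, 7 => -1 | 4, 2, 7 => 1
  | 1, 3, 5 => 1 | 3, 1, 5 => -1 | 2, 3, 4 => -1 | 3, 2, 4 => 1
  | 4, 0, 5 => 1 | 0, 4, 5 => -1 | 5, 0, 4 => -1 | 0, 5, 4 => 1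
  | 4, 5, 6 => lam | 5, 4, 6 => -lam
  | 4, 3, 2 => lam | 3, 4, 2 => -lam | 5, 3, 1 => -lam | 3, 5, 1 => lam
  | _, _, _ => 0

def nhBr (lam : ℝ) (x y : Fin 8 → ℝ) : Fin 8 → ℝ :=
  fun k => ∑ i, ∑ j, x i * y j * nhC lam i j k

/-- Coefficients of the bilinear form: `⟨J,M⟩ = ⟨H,S⟩ = 1/(8πG)`,
`⟨Pᵢ,J_j⟩ = -δ_{ij}/(8πG)`, all other pairings of basis vectors zero. -/
noncomputable def nhG (G : ℝ) (i j : Fin 8) : ℝ :=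
  match i.val, j.val with
  | 0, 7 => 1 / (8 * Real.pi * G) | 7, 0 => 1 / (8 * Real.pi * G)
  | 3, 6 => 1 / (8 * Real.pi * G) | 6, 3 => 1 / (8 * Real.pi * G)
  | 4, 1 => -(1 / (8 * Real.pi * G)) | 1, 4 => -(1 / (8 * Real.pi * G))
  | 5, 2 => -(1 / (8 * Real.pi * G)) | 2, 5 => -(1 / (8 * Real.pi * G))
  | _, _ => 0

noncomputable def nhB (G : ℝ) (x y : Fin 8 → ℝ) : ℝ :=
  ∑ i, ∑ j, x i * y j * nhG G i j


def nhC' (lam : ℝ) (i j k : Fin 8) : ℝ :=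
  if i = 1 ∧ j = 2 ∧ k = 6 then 1 else if i = 2 ∧ j = 1 ∧ k = 6 then -1 else
  if i = 1 ∧ j = 0 ∧ k = 2 then 1 else if i = 0 ∧ j = 1 ∧ k = 2 then -1 else
  if i = 2 ∧ j = 0 ∧ k = 1 then -1 else if i = 0 ∧ j = 2 ∧ k = 1 then 1 else
  if i = 1 ∧ j = 5 ∧ k = 7 then 1 else if i = 5 ∧ j = 1 ∧ k = 7 then -1 else
  if i = 2 ∧ j = 4 ∧ k = 7 then -1 else if i = 4 ∧ j = 2 ∧ k = 7 then 1 else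
  if i = 1 ∧ j = 3 ∧ k = 5 then 1 else if i = 3 ∧ j = 1 ∧ k = 5 then -1 else
  if i = 2 ∧ j = 3 ∧ k = 4 then -1 else if i = 3 ∧ j = 2 ∧ k = 4 then 1 else
  if i = 4 ∧ j = 0 ∧ k = 5 then 1 else if i = 0 ∧ j = 4 ∧ k = 5 then -1 else
  if i = 5 ∧ j = 0 ∧ k = 4 then -1 else if i = 0 ∧ j = 5 ∧ k = 4 then 1 else
  if i = 4 ∧ j = 5 ∧ k = 6 then lam else if i = 5 ∧ j = 4 ∧ k = 6 then -lam else
  if i = 4 ∧ j = 3 ∧ k = 2 then lam else if i = 3 ∧ j = 4 ∧ k = 2 then -lam else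
  if i = 5 ∧ j = 3 ∧ k = 1 then -lam else if i = 3 ∧ j = 5 ∧ k = 1 then lam else 0

noncomputable def nhG' (G : ℝ) (i j : Fin 8) : ℝ :=
  if i = 0 ∧ j = 7 then 1 / (8 * Real.pi * G) else if i = 7 ∧ j = 0 then 1 / (8 * Real.pi * G) else
  if i = 3 ∧ j = 6 then 1 / (8 * Real.pi * G) else if i = 6 ∧ j = 3 then 1 / (8 * Real.pi * G) else
  if i = 4 ∧ j = 1 then -(1 / (8 * Real.pi * G)) else if i = 1 ∧ j = 4 then -(1 / (8 * Real.pi * G)) else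
  if i = 5 ∧ j = 2 then -(1 / (8 * Real.pi * G)) else if i = 2 ∧ j = 5 then -(1 / (8 * Real.pi * G)) else 0

lemma nhC_eq (lam : ℝ) (i j k : Fin 8) : nhC lam i j k = nhC' lam i j k := by
  fin_cases i <;> fin_cases j <;> fin_cases k <;> rfl

lemma nhG_eq (G : ℝ) (i j : Fin 8) : nhG G i j = nhG' G i j := by
  fin_cases i <;> fin_cases j <;> rfl

set_option maxHeartbeats 4000000 in
/-- the bilinear form is invariant under the adjoint action. -/
theorem newton_hooke_form_invariant (lam G : ℝ) (hG : G ≠ 0) :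
    ∀ X Y Z : Fin 8 → ℝ,
      nhB G (nhBr lam X Y) Z + nhB G Y (nhBr lam X Z) = 0 := by
  intro X Y Z
  have hb : ∀ x y : Fin 8 → ℝ, nhB G x y =
      (x 0 * y 7 + x 7 * y 0 + x 3 * y 6 + x 6 * y 3
        - x 4 * y 1 - x 1 * y 4 - x 5 * y 2 - x 2 * y 5) * (1 / (8 * Real.pi * G)) := by
    intro x y
    simp [nhB, nhG_eq, nhG', Fin.sum_univ_eight]
    ring
  have h0 : ∀ x y : Fin 8 → ℝ, nhBr lam x y 0 = 0 := by
    intro x y; simp [nhBr, nhC_eq, nhC', Fin.sum_univ_eight]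
  have h3 : ∀ x y : Fin 8 → ℝ, nhBr lam x y 3 = 0 := by
    intro x y; simp [nhBr, nhC_eq, nhC', Fin.sum_univ_eight]
  have h1 : ∀ x y : Fin 8 → ℝ, nhBr lam x y 1 =
      -(x 2 * y 0) + x 0 * y 2 - lam * (x 5 * y 3) + lam * (x 3 * y 5) := by
    intro x y; simp [nhBr, nhC_eq, nhC', Fin.sum_univ_eight]; ring
  have h2 : ∀ x y : Fin 8 → ℝ, nhBr lam x y 2 =
      x 1 * y 0 - x 0 * y 1 + lam * (x 4 * y 3) - lam * (x 3 * y 4) := by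
    intro x y; simp [nhBr, nhC_eq, nhC', Fin.sum_univ_eight]; ring
  have h4 : ∀ x y : Fin 8 → ℝ, nhBr lam x y 4 =
      -(x 2 * y 3) + x 3 * y 2 - x 5 * y 0 + x 0 * y 5 := by
    intro x y; simp [nhBr, nhC_eq, nhC', Fin.sum_univ_eight]; ring
  have h5 : ∀ x y : Fin 8 → ℝ, nhBr lam x y 5 =
      x 1 * y 3 - x 3 * y 1 + x 4 * y 0 - x 0 * y 4 := by
    intro x y; simp [nhBr, nhC_eq, nhC', Fin.sum_univ_eight]; ring
  have h6 : ∀ x y : Fin 8 → ℝ, nhBr lam x y 6 =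
      x 1 * y 2 - x 2 * y 1 + lam * (x 4 * y 5) - lam * (x 5 * y 4) := by
    intro x y; simp [nhBr, nhC_eq, nhC', Fin.sum_univ_eight]; ring
  have h7 : ∀ x y : Fin 8 → ℝ, nhBr lam x y 7 =
      x 1 * y 5 - x 5 * y 1 - x 2 * y 4 + x 4 * y 2 := by
    intro x y; simp [nhBr, nhC_eq, nhC', Fin.sum_univ_eight]; ring
  rw [hb, hb, h0, h1, h2, h3, h4, h5, h6, h7, h0, h1, h2, h3, h4, h5, h6, h7]
  ring
end

section
/- For λ > 0, the generators J± = ½(J ± H/√λ), J_i± = ½(J_i ± P_i/√λ), S± = ½(S ± M/√λ) of the extended Newton-Hooke Lie algebra satisfy: each of the sets {J+, J1+, J2+, S+} and {J−, J1−, J2−, S−} satisfies the Nappi-Witten relations [J1±,J2±]=S±, [J_i±,J±]=ε_{ij}J_j±, and all brackets between a plus generator and a minus generator vanish. -/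
lemma nhBr_add_left (lam : ℝ) (x x' y : Fin 8 → ℝ) :
    nhBr lam (x + x') y = nhBr lam x y + nhBr lam x' y := by
  funext k
  simp [nhBr, add_mul, Finset.sum_add_distrib]

lemma nhBr_add_right (lam : ℝ) (x y y' : Fin 8 → ℝ) :
    nhBr lam x (y + y') = nhBr lam x y + nhBr lam x y' := by
  funext k
  simp [nhBr, mul_add, add_mul, Finset.sum_add_distrib]

lemma nhBr_smul_left (lam c : ℝ) (x y : Fin 8 → ℝ) :
    nhBr lam (c • x) y = c • nhBr lam x y := by
  funext k
  simp [nhBr, Finset.mul_sum, mul_assoc]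

lemma nhBr_smul_right (lam c : ℝ) (x y : Fin 8 → ℝ) :
    nhBr lam x (c • y) = c • nhBr lam x y := by
  funext k
  simp [nhBr, Finset.mul_sum]
  congr 1; funext i; congr 1; funext j; ring

lemma nhBr_e (lam : ℝ) (i j : Fin 8) :
    nhBr lam (Pi.single i 1) (Pi.single j 1) = nhC lam i j := by
  funext k
  simp [nhBr, Pi.single_apply]

lemma nhBr_comb (lam c d : ℝ) (a b a' b' : Fin 8) :
    nhBr lam ((1/2 : ℝ) • ((Pi.single a 1 : Fin 8 → ℝ) + c • (Pi.single b 1 : Fin 8 → ℝ)))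
        ((1/2 : ℝ) • ((Pi.single a' 1 : Fin 8 → ℝ) + d • (Pi.single b' 1 : Fin 8 → ℝ)))
      = (1/4 : ℝ) • (nhC lam a a' + d • nhC lam a b' + c • nhC lam b a'
          + (c*d) • nhC lam b b') := by
  simp only [nhBr_smul_left, nhBr_smul_right, nhBr_add_left, nhBr_add_right, nhBr_e,
    smul_add, smul_smul]
  funext k
  simp
  ring

set_option maxHeartbeats 4000000 in
/-- for `λ > 0`, the generators
`J± = ½(J ± H/√λ)`, `Jᵢ± = ½(Jᵢ ± Pᵢ/√λ)`, `S± = ½(S ± M/√λ)` each satisfy the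
Nappi-Witten relations, and all brackets between plus and minus generators
vanish. -/
theorem newton_hooke_splits_for_positive_lambda (lam : ℝ) (hlam : 0 < lam) :
    let e : Fin 8 → (Fin 8 → ℝ) := fun i => Pi.single i 1
    let s := Real.sqrt lam
    let Jp := (1 / 2 : ℝ) • (e 0 + s⁻¹ • e 3)
    let Jm := (1 / 2 : ℝ) • (e 0 - s⁻¹ • e 3)
    let J1p := (1 / 2 : ℝ) • (e 1 + s⁻¹ • e 4)
    let J1m := (1 / 2 : ℝ) • (e 1 - s⁻¹ • e 4)
    let J2p := (1 / 2 : ℝ) • (e 2 + s⁻¹ • e 5)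
    let J2m := (1 / 2 : ℝ) • (e 2 - s⁻¹ • e 5)
    let Sp := (1 / 2 : ℝ) • (e 6 + s⁻¹ • e 7)
    let Sm := (1 / 2 : ℝ) • (e 6 - s⁻¹ • e 7)
    (nhBr lam J1p J2p = Sp ∧ nhBr lam J1p Jp = J2p ∧ nhBr lam J2p Jp = -J1p ∧
       (∀ X ∈ [Jp, J1p, J2p, Sp], nhBr lam Sp X = 0)) ∧
    (nhBr lam J1m J2m = Sm ∧ nhBr lam J1m Jm = J2m ∧ nhBr lam J2m Jm = -J1m ∧
       (∀ X ∈ [Jm, J1m, J2m, Sm], nhBr lam Sm X = 0)) ∧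
    (∀ X ∈ [Jp, J1p, J2p, Sp], ∀ Y ∈ [Jm, J1m, J2m, Sm],
       nhBr lam X Y = 0) := by
  intro e s Jp Jm J1p J1m J2p J2m Sp Sm
  have hs2 : s * s = lam := Real.mul_self_sqrt hlam.le
  have hs0 : s ≠ 0 := by positivity
  refine ⟨⟨?_, ?_, ?_, ?_⟩, ⟨?_, ?_, ?_, ?_⟩, ?_⟩ <;>
    try simp only [List.mem_cons, List.not_mem_nil, or_false]
  all_goals try rintro X (rfl | rfl | rfl | rfl)
  all_goals try rintro Y (rfl | rfl | rfl | rfl)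
  all_goals
  · simp only [Jp, Jm, J1p, J1m, J2p, J2m, Sp, Sm, e, sub_eq_add_neg, ← neg_smul]
    rw [nhBr_comb]
    funext k
    rw [← hs2]
    fin_cases k <;>
      simp [nhC, Pi.single_apply] <;>
      field_simp <;> ring
end

section
/- For each real λ, the maps t ↦ R(√λ·α)·t (acting on the vector (√λ t, w) when λ>0, interpreted via power series of sin and cos in general) and x ↦ R(φ)x + t v + w a, for parameters φ, α ∈ ℝ and v, a ∈ ℝ², preserve the hypersurface H_λ = {(t,x,y,w) ∈ ℝ⁴ : w² + λ t² = 1} and the Euclidean form dx²+dy² on the spatial plane. -/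
/-- `cos(√λ α)`, defined by its power series in `λ` (real for all real `λ`):
`cosh(√(-λ) α)` for `λ < 0`. -/
noncomputable def cosl (lam α : ℝ) : ℝ :=
  if 0 ≤ lam then Real.cos (Real.sqrt lam * α) else Real.cosh (Real.sqrt (-lam) * α)

/-- `sin(√λ α)/√λ`, defined by its power series in `λ` (real for all real `λ`):
`α` for `λ = 0` and `sinh(√(-λ) α)/√(-λ)` for `λ < 0`. -/
noncomputable def sinl (lam α : ℝ) : ℝ :=
  if lam = 0 then α
  else if 0 < lam then Real.sin (Real.sqrt lam * α) / Real.sqrt lam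
  else Real.sinh (Real.sqrt (-lam) * α) / Real.sqrt (-lam)

/-- Rotation of the plane by angle `φ`. -/
noncomputable def rot (φ : ℝ) (w : ℝ × ℝ) : ℝ × ℝ :=
  (Real.cos φ * w.1 + Real.sin φ * w.2, -Real.sin φ * w.1 + Real.cos φ * w.2)


/-!
The time sector is a "generalized rotation" `(t, w) ↦ (c t + s w, -λ s t + c w)` with
`c = cosl λ α`, `s = sinl λ α`; it multiplies the form `w² + λ t²` by `c² + λ s²`, which is `1` in
each of the three cases `λ > 0` (`cos² + sin² = 1`), `λ = 0` and `λ < 0` (`cosh² - sinh² = 1`).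
The spatial map is a rotation followed by a translation, and the translation cancels in differences.
-/

open Real

lemma cosl_sq_add_mul_sinl_sq (lam α : ℝ) : cosl lam α ^ 2 + lam * sinl lam α ^ 2 = 1 := by
  rcases lt_trichotomy lam 0 with hneg | rfl | hpos
  · have hsq : √(-lam) ^ 2 = -lam := sq_sqrt (by linarith)
    have hne : √(-lam) ≠ 0 := (sqrt_pos.mpr (by linarith)).ne'
    simp only [cosl, sinl, not_le.mpr hneg, hneg.ne, not_lt.mpr hneg.le, if_false]
    field_simp
    rw [hsq]
    linear_combination -lam * cosh_sq_sub_sinh_sq (√(-lam) * α)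
  · simp [cosl, sinl]
  · have hsq : √lam ^ 2 = lam := sq_sqrt hpos.le
    have hne : √lam ≠ 0 := (sqrt_pos.mpr hpos).ne'
    simp only [cosl, sinl, hpos.le, hpos.ne', hpos, if_true, if_false]
    field_simp
    rw [hsq]
    linear_combination lam * sin_sq_add_cos_sq (√lam * α)

lemma timeForm_generalizedRotation (lam c s t w : ℝ) :
    (-lam * s * t + c * w) ^ 2 + lam * (c * t + s * w) ^ 2 =
      (c ^ 2 + lam * s ^ 2) * (w ^ 2 + lam * t ^ 2) := by
  ring

lemma rot_sub (φ : ℝ) (x y : ℝ × ℝ) : rot φ x - rot φ y = rot φ (x - y) := by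
  ext <;> simp only [rot, Prod.fst_sub, Prod.snd_sub] <;> ring

lemma rot_normSq (φ : ℝ) (x : ℝ × ℝ) :
    (rot φ x).1 ^ 2 + (rot φ x).2 ^ 2 = x.1 ^ 2 + x.2 ^ 2 := by
  simp only [rot]
  linear_combination (x.1 ^ 2 + x.2 ^ 2) * sin_sq_add_cos_sq φ

/-- the Newton-Hooke transformations, given on the time sector by
the `R(√λ α)`-rotation of `(θt, w)` (interpreted via power series, i.e.
`t ↦ cosl λ α · t + sinl λ α · w`, `w ↦ -λ · sinl λ α · t + cosl λ α · w`) and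
on the spatial sector by `x ↦ R(φ)x + t v + w a`, preserve the hypersurface
`H_λ = {w² + λ t² = 1}`, and the spatial map is an affine isometry of the
Euclidean plane for each fixed `(t, w)`. -/
theorem newton_hooke_transformations_preserve_structure
    (lam φ α : ℝ) (v a : ℝ × ℝ) (t w : ℝ) (hH : w ^ 2 + lam * t ^ 2 = 1) :
    ((-lam * sinl lam α * t + cosl lam α * w) ^ 2 +
        lam * (cosl lam α * t + sinl lam α * w) ^ 2 = 1) ∧
    (∀ x₁ x₂ : ℝ × ℝ,
      let f : ℝ × ℝ → ℝ × ℝ := fun x => rot φ x + t • v + w • a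
      (f x₁ - f x₂).1 ^ 2 + (f x₁ - f x₂).2 ^ 2 =
        (x₁ - x₂).1 ^ 2 + (x₁ - x₂).2 ^ 2) := by
  refine ⟨?_, fun x₁ x₂ => ?_⟩
  · rw [timeForm_generalizedRotation, cosl_sq_add_mul_sinl_sq, hH, one_mul]
  · have hdiff : rot φ x₁ + t • v + w • a - (rot φ x₂ + t • v + w • a) = rot φ (x₁ - x₂) := by
      rw [add_sub_add_right_eq_sub, add_sub_add_right_eq_sub, rot_sub]
    simp only [hdiff, rot_normSq]
end

section
/- The element r = −(a/2)(S̃⊗J̃ + J̃⊗S̃) + a Z⊗Z̄ of the tensor square of the extended Heisenberg algebra satisfies the classical Yang-Baxter equation [[r,r]] := [r_{12},r_{13}] + [r_{12},r_{23}] + [r_{13},r_{23}] = 0. -/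
set_option maxHeartbeats 2000000


/-- Structure constants of the extended Heisenberg algebra,
basis `0 = J̃, 1 = Z, 2 = Z̄, 3 = S̃`:
`[Z,Z̄] = S̃`, `[Z,J̃] = Z`, `[Z̄,J̃] = -Z̄`, `S̃` central. -/
def hC (i j k : Fin 4) : ℂ :=
  match i.val, j.val, k.val with
  | 1, 2, 3 => 1 | 2, 1, 3 => -1
  | 1, 0, 1 => 1 | 0, 1, 1 => -1
  | 2, 0, 2 => -1 | 0, 2, 2 => 1
  | _, _, _ => 0

/-- The component at `e_p ⊗ e_q ⊗ e_s` of
`[[r,r]] = [r₁₂,r₁₃] + [r₁₂,r₂₃] + [r₁₃,r₂₃]` for an element `r` of the tensor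
square with coefficient matrix `r i j` (so that `r = ∑ rⁱʲ eᵢ⊗e_j`). -/
noncomputable def cybe (r : Fin 4 → Fin 4 → ℂ) (p q s : Fin 4) : ℂ :=
  (∑ i, ∑ k, r i q * r k s * hC i k p) +
    (∑ j, ∑ k, r p j * r k s * hC j k q) +
    ∑ j, ∑ l, r p j * r q l * hC j l s

/-- Coefficient matrix of `r = -(a/2)(S̃⊗J̃ + J̃⊗S̃) + a Z⊗Z̄`. -/
noncomputable def rHeis (a : ℂ) : Fin 4 → Fin 4 → ℂ :=
  fun k l =>
    match k.val, l.val with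
    | 3, 0 => -(a / 2) | 0, 3 => -(a / 2)
    | 1, 2 => a
    | _, _ => 0

/-- `r = -(a/2)(S̃⊗J̃ + J̃⊗S̃) + a Z⊗Z̄` satisfies the classical
Yang-Baxter equation. -/
theorem heisenberg_r_matrix_cybe (a : ℂ) :
    ∀ p q s : Fin 4, cybe (rHeis a) p q s = 0 := by
  intro p q s
  fin_cases p <;> fin_cases q <;> fin_cases s <;>
    simp [cybe, rHeis, hC, Fin.sum_univ_four] <;> ring
end

section
/- In the 3×3 matrix representation of the extended Heisenberg algebra, the image R of the quantum R-matrix exp(−(α/2)(J̃⊗S̃ + S̃⊗J̃))·exp(α e^{(α/4)S̃}Z ⊗ e^{−(α/4)S̃}Z̄) equals 1⊗1 + α·ρ⊗ρ(r/a) exactly, where r = −(a/2)(S̃⊗J̃+J̃⊗S̃) + a Z⊗Z̄; i.e. the expansion of R in α terminates at first order. -/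
/-!
In the representation every exponent squares to zero (`ρ(S̃)² = ρ(Z)² = 0` and
`ρ(J̃)ρ(S̃) = ρ(S̃)ρ(J̃) = 0`), so each exponential is `1` plus its exponent. The dressings
`e^{±(α/4)S̃}` then act trivially on `Z` and `Z̄` because `ρ(S̃)ρ(Z) = ρ(S̃)ρ(Z̄) = 0`, and the
product of the two remaining factors has no cross term because `ρ(J̃)ρ(Z) = ρ(S̃)ρ(Z) = 0`.
-/

open NormedSpace Matrix Kronecker

/-- `ρ(J̃) = E₂₂` in the 3×3 matrix representation. -/
def rhoJ : Matrix (Fin 3) (Fin 3) ℝ := Matrix.single 1 1 1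
/-- `ρ(Z) = E₁₂`. -/
def rhoZ : Matrix (Fin 3) (Fin 3) ℝ := Matrix.single 0 1 1
/-- `ρ(Z̄) = E₂₃`. -/
def rhoZbar : Matrix (Fin 3) (Fin 3) ℝ := Matrix.single 1 2 1
/-- `ρ(S̃) = E₁₃`. -/
def rhoS : Matrix (Fin 3) (Fin 3) ℝ := Matrix.single 0 2 1

section SquareZero

variable {R 𝔸 : Type*} [CommSemiring R] [Ring 𝔸] [Algebra R 𝔸] {x y : 𝔸}

theorem smul_mul_smul_self_eq_zero (hx : x * x = 0) (t : R) : (t • x) * (t • x) = 0 := by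
  rw [smul_mul_smul_comm, hx, smul_zero]

variable [Algebra ℚ 𝔸] [TopologicalSpace 𝔸] [IsTopologicalRing 𝔸]

theorem exp_eq_one_add_of_mul_self_eq_zero (hx : x * x = 0) : exp x = 1 + x := by
  have hpow : ∀ n, 1 < n → x ^ n = 0 := fun n hn => by
    obtain ⟨k, rfl⟩ := Nat.exists_eq_add_of_le hn
    rw [pow_add, sq, hx, zero_mul]
  rw [congrFun exp_eq_tsum_rat x, tsum_eq_sum (s := Finset.range 2) fun n hn => by
    rw [hpow n (by simpa using hn), smul_zero]]
  simp [Finset.sum_range_succ]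

theorem exp_smul_eq_one_add_smul (hx : x * x = 0) (t : R) : exp (t • x) = 1 + t • x :=
  exp_eq_one_add_of_mul_self_eq_zero (smul_mul_smul_self_eq_zero hx t)

theorem exp_smul_mul_eq_self (hx : x * x = 0) (hxy : x * y = 0) (t : R) :
    exp (t • x) * y = y := by
  rw [exp_smul_eq_one_add_smul hx, add_mul, one_mul, smul_mul_assoc, hxy, smul_zero, add_zero]

theorem exp_smul_mul_exp_smul (hx : x * x = 0) (hy : y * y = 0) (hxy : x * y = 0) (s t : R) :
    exp (s • x) * exp (t • y) = 1 + s • x + t • y := by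
  rw [exp_smul_eq_one_add_smul hx, exp_smul_eq_one_add_smul hy, add_mul, mul_add, mul_add,
    one_mul, mul_one, smul_mul_smul_comm, hxy, smul_zero, add_zero, one_mul]
  abel

end SquareZero

theorem rhoS_mul_rhoS : rhoS * rhoS = 0 := single_mul_single_of_ne (h := by decide) ..
theorem rhoS_mul_rhoZ : rhoS * rhoZ = 0 := single_mul_single_of_ne (h := by decide) ..
theorem rhoS_mul_rhoZbar : rhoS * rhoZbar = 0 := single_mul_single_of_ne (h := by decide) ..
theorem rhoS_mul_rhoJ : rhoS * rhoJ = 0 := single_mul_single_of_ne (h := by decide) ..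
theorem rhoJ_mul_rhoS : rhoJ * rhoS = 0 := single_mul_single_of_ne (h := by decide) ..
theorem rhoJ_mul_rhoZ : rhoJ * rhoZ = 0 := single_mul_single_of_ne (h := by decide) ..
theorem rhoZ_mul_rhoZ : rhoZ * rhoZ = 0 := single_mul_single_of_ne (h := by decide) ..

theorem kronecker_rhoJ_rhoS_add_mul_self :
    (rhoJ ⊗ₖ rhoS + rhoS ⊗ₖ rhoJ) * (rhoJ ⊗ₖ rhoS + rhoS ⊗ₖ rhoJ) = 0 := by
  simp only [add_mul, mul_add, ← mul_kronecker_mul, rhoS_mul_rhoS, rhoJ_mul_rhoS, rhoS_mul_rhoJ,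
    kronecker_zero, zero_kronecker, add_zero]

theorem kronecker_rhoZ_rhoZbar_mul_self : (rhoZ ⊗ₖ rhoZbar) * (rhoZ ⊗ₖ rhoZbar) = 0 := by
  rw [← mul_kronecker_mul, rhoZ_mul_rhoZ, zero_kronecker]

theorem kronecker_rhoJ_rhoS_add_mul_kronecker_rhoZ_rhoZbar :
    (rhoJ ⊗ₖ rhoS + rhoS ⊗ₖ rhoJ) * (rhoZ ⊗ₖ rhoZbar) = 0 := by
  rw [add_mul, ← mul_kronecker_mul, ← mul_kronecker_mul, rhoJ_mul_rhoZ, rhoS_mul_rhoZ,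
    zero_kronecker, zero_kronecker, add_zero]

/-- in the 3×3 matrix representation, the quantum R-matrix
`exp(-(α/2)(J̃⊗S̃ + S̃⊗J̃)) · exp(α e^{(α/4)S̃} Z ⊗ e^{-(α/4)S̃} Z̄)` equals
`1⊗1 + α·(ρ⊗ρ)(r/a)` exactly, where
`r/a = -(1/2)(S̃⊗J̃ + J̃⊗S̃) + Z⊗Z̄`: the expansion in `α` terminates at first
order. -/
theorem quantum_R_matrix_linear_in_alpha (α : ℝ) :
    exp ((-(α / 2)) • (rhoJ ⊗ₖ rhoS + rhoS ⊗ₖ rhoJ)) *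
      exp (α • ((exp ((α / 4) • rhoS) * rhoZ) ⊗ₖ
        (exp ((-(α / 4)) • rhoS) * rhoZbar))) =
    (1 : Matrix (Fin 3 × Fin 3) (Fin 3 × Fin 3) ℝ) +
      α • ((-(1 / 2 : ℝ)) • (rhoS ⊗ₖ rhoJ + rhoJ ⊗ₖ rhoS) + rhoZ ⊗ₖ rhoZbar) := by
  rw [exp_smul_mul_eq_self rhoS_mul_rhoS rhoS_mul_rhoZ,
    exp_smul_mul_eq_self rhoS_mul_rhoS rhoS_mul_rhoZbar,
    exp_smul_mul_exp_smul kronecker_rhoJ_rhoS_add_mul_self kronecker_rhoZ_rhoZbar_mul_self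
      kronecker_rhoJ_rhoS_add_mul_kronecker_rhoZ_rhoZbar]
  module
end
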